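/- Let m be a positive integer and N = 2·(2m+1). Then N has at least one representation as a sum of r ≥ 2 successive even positive numbers, and N has no representation as a sum of r ≥ 2 successive odd positive numbers. -/

import Mathlib

/-!
A run of `r` successive odd or even numbers starting at `a` sums to `r (a + r - 1)`.
For odd `a` the factor `a + r - 1` has the parity of `r`, so the sum is either odd
or divisible by `4`, never `2 (2m + 1)`. For even numbers, `2m + (2m + 2)` works.
-/

open Finset

theorem Nat.sum_range_add_two_mul (a r : ℕ) :
    ∑ i ∈ range r, (a + 2 * i) = r * (a + r - 1) := by
  have h := Finset.sum_range_id_mul_two r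
  rw [sum_add_distrib, sum_const, card_range, smul_eq_mul, ← mul_sum]
  rcases r with _ | r
  · simp
  · rw [Nat.add_sub_cancel] at h
    rw [show a + (r + 1) - 1 = a + r by omega]
    linarith

theorem Odd.sum_range_add_two_mul_mod_four_ne_two {a : ℕ} (ha : Odd a) (r : ℕ) :
    (∑ i ∈ range r, (a + 2 * i)) % 4 ≠ 2 := by
  rw [Nat.sum_range_add_two_mul]
  rcases Nat.even_or_odd r with ⟨s, rfl⟩ | hr
  · obtain ⟨t, ht⟩ : Even (a + (s + s) - 1) := by
      obtain ⟨k, rfl⟩ := ha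
      exact ⟨k + s, by omega⟩
    rw [ht, show (s + s) * (t + t) = 4 * (s * t) by ring, Nat.mul_mod_right]
    decide
  · have hodd : Odd (r * (a + r - 1)) := by
      refine hr.mul ?_
      obtain ⟨k, rfl⟩ := ha
      obtain ⟨s, rfl⟩ := hr
      exact ⟨k + s, by omega⟩
    have := Nat.odd_iff.mp hodd
    omega

/-- Every number of the form 2·(2m+1), m ≥ 1, is a sum of r ≥ 2 successive even
positive numbers, and is never a sum of r ≥ 2 successive odd positive numbers. -/
theorem two_mul_odd_exclusively_even_sums (m : ℕ) (hm : 0 < m) :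
    (∃ r a : ℕ, 2 ≤ r ∧ 0 < a ∧ Even a ∧
      2 * (2 * m + 1) = ∑ i ∈ Finset.range r, (a + 2 * i)) ∧
    ¬ ∃ r a : ℕ, 2 ≤ r ∧ 0 < a ∧ Odd a ∧
      2 * (2 * m + 1) = ∑ i ∈ Finset.range r, (a + 2 * i) := by
  refine ⟨⟨2, 2 * m, le_rfl, by omega, even_two_mul m, ?_⟩, ?_⟩
  · rw [Nat.sum_range_add_two_mul]
    omega
  · rintro ⟨r, a, -, -, ha, hsum⟩
    exact ha.sum_range_add_two_mul_mod_four_ne_two r (hsum ▸ by omega)
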